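/- Let {γ^A : A ∈ I} be a basis of Cl(p,q) generated by γ^1,...,γ^n satisfying the Clifford relations, with n = p+q odd. Then F(U) = (1/2^n) ∑_A (γ^A)^{-1} U γ^A = Tr(U)·e + π(U)·e^{1...n}, and F is a projection (F∘F = F) onto the center Cl_0 ⊕ Cl_n of the Clifford algebra. -/

import Mathlib

/-!
Averaging the conjugates `(γ^A)⁻¹ U γ^A` over the whole basis produces an element commuting with
every `γ^a`, since right multiplication by `γ^a` permutes the basis up to sign; so `F(U)` is
central. Conjugation by `e^a` multiplies `e^t` by `(-1)^{|t \ {a}|}`, and for `t ≠ ∅, {1,…,n}`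
some `a` makes this sign `-1`; hence a central element has no coordinates besides `Tr` and `π`.
Both are traces, `Tr(XY) = Tr(YX)` and `π(XY) = π(YX)` (the latter because `n` is odd), so they
are invariant under conjugation and `F` preserves them. This gives the formula for `F(U)`, and
applying it to `F(U)` gives `F ∘ F = F`.
-/
/-- Ordered product `e^{a_1} ⋯ e^{a_k}` (`a_1 < ⋯ < a_k`) of generators over an
ordered multi-index, encoded as a finset of indices. For `s = ∅` this is `1 = e`. -/
def cliffProd {n : ℕ} {A : Type*} [Ring A] (e : Fin n → A) (s : Finset (Fin n)) : A :=
  ((s.sort (· ≤ ·)).map e).prod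

/-- The entries of the diagonal matrix `η = diag(1,…,1,−1,…,−1)` with `p` entries `+1`
followed by `q = n - p` entries `−1`. -/
def eta (p : ℕ) {n : ℕ} (a b : Fin n) : ℤ :=
  if a = b then (if (a : ℕ) < p then 1 else -1) else 0

/-- The operator `F(U) = 2⁻ⁿ ∑_A (γ^A)⁻¹ U γ^A`. -/
noncomputable def genF (F : Type*) [RCLike F] {n : ℕ} {A : Type*} [Ring A] [Algebra F A]
    (γ : Fin n → A) (U : A) : A :=
  ((2 : F) ^ n)⁻¹ • ∑ s : Finset (Fin n), Ring.inverse (cliffProd γ s) * U * cliffProd γ s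

open scoped symmDiff

section Clifford

variable {A : Type*} [Ring A] {n : ℕ}

@[simp]
lemma cliffProd_empty (c : Fin n → A) : cliffProd c ∅ = 1 := by
  simp [cliffProd]

lemma cliffProd_insert_of_forall_lt (c : Fin n → A) {a : Fin n} {s : Finset (Fin n)}
    (h : ∀ x ∈ s, a < x) : cliffProd c (insert a s) = c a * cliffProd c s := by
  rw [cliffProd, Finset.sort_insert _ (fun x hx => (h x hx).le) (fun ha => (h a ha).false),
    List.map_cons, List.prod_cons, cliffProd]

@[simp]
lemma cliffProd_singleton (c : Fin n → A) (a : Fin n) : cliffProd c {a} = c a := by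
  simpa using cliffProd_insert_of_forall_lt c (s := ∅) (a := a) (by simp)

lemma isUnit_cliffProd {c : Fin n → A} (hc : ∀ a, IsUnit (c a)) (s : Finset (Fin n)) :
    IsUnit (cliffProd c s) :=
  List.prod_isUnit (by simpa using fun a _ => hc a)

lemma commute_cliffProd {c : Fin n → A} {Z : A} (h : ∀ a, Commute (c a) Z)
    (s : Finset (Fin n)) : Commute (cliffProd c s) Z :=
  Commute.list_prod_left _ _ (by simpa using fun a _ => h a)

structure IsCliffordFamily (c : Fin n → A) : Prop where
  mul_self : ∀ a, ∃ ε : ℤˣ, c a * c a = ε • (1 : A)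
  anticomm : ∀ a b, a ≠ b → c a * c b = -(c b * c a)

lemma isCliffordFamily_of_mul_add_mul_eq_eta [IsAddTorsionFree A] (p : ℕ) {c : Fin n → A}
    (h : ∀ a b, c a * c b + c b * c a = ((2 * eta p a b : ℤ) : A)) : IsCliffordFamily c where
  mul_self a := by
    refine ⟨if (a : ℕ) < p then 1 else -1, nsmul_right_injective two_ne_zero ?_⟩
    have haa := h a a
    simp only [eta, if_true] at haa
    split_ifs at haa ⊢ <;> simpa [two_nsmul, two_mul] using haa
  anticomm a b hab := by
    have hab' := h a b
    rw [eta, if_neg hab] at hab'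
    exact eq_neg_of_add_eq_zero_left (by simpa using hab')

namespace IsCliffordFamily

variable {c : Fin n → A} (hc : IsCliffordFamily c)
include hc

lemma isUnit (a : Fin n) : IsUnit (c a) := by
  obtain ⟨ε, hε⟩ := hc.mul_self a
  have hl : (ε • c a) * c a = 1 := by
    rw [smul_mul_assoc, hε, smul_smul, Int.units_mul_self, one_smul]
  have hr : c a * (ε • c a) = 1 := by
    rw [mul_smul_comm, hε, smul_smul, Int.units_mul_self, one_smul]
  exact ⟨⟨c a, ε • c a, hr, hl⟩, rfl⟩

lemma exists_mul_cliffProd_eq (a : Fin n) (t : Finset (Fin n)) :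
    ∃ ζ : ℤˣ, c a * cliffProd c t = ζ • cliffProd c ({a} ∆ t) := by
  induction t using Finset.induction_on_min with
  | empty =>
    exact ⟨1, by rw [← Finset.bot_eq_empty, symmDiff_bot, one_smul, cliffProd_singleton,
      Finset.bot_eq_empty, cliffProd_empty, mul_one]⟩
  | insert m t hm ih =>
    have hmt : m ∉ t := fun h => (hm m h).false
    rw [cliffProd_insert_of_forall_lt c hm]
    rcases lt_trichotomy a m with ham | rfl | hma
    · have hat : ∀ x ∈ insert m t, a < x := by
        simpa using ⟨ham, fun x hx => ham.trans (hm x hx)⟩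
      have hset : {a} ∆ insert m t = insert a (insert m t) := by
        rw [(Finset.disjoint_singleton_left.2 fun h => (hat a h).false).symmDiff_eq_sup]
        rfl
      refine ⟨1, ?_⟩
      rw [one_smul, hset, cliffProd_insert_of_forall_lt c hat, cliffProd_insert_of_forall_lt c hm]
    · obtain ⟨ε, hε⟩ := hc.mul_self a
      have hset : {a} ∆ insert a t = t := by
        ext x; simp only [Finset.mem_symmDiff, Finset.mem_singleton, Finset.mem_insert]
        grind
      exact ⟨ε, by rw [← mul_assoc, hε, smul_mul_assoc, one_mul, hset]⟩
    · obtain ⟨ζ, hζ⟩ := ih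
      have hmat : ∀ x ∈ {a} ∆ t, m < x := by
        intro x hx
        rcases Finset.mem_symmDiff.1 hx with ⟨hx, -⟩ | ⟨hx, -⟩
        · exact (Finset.mem_singleton.1 hx) ▸ hma
        · exact hm x hx
      have hset : {a} ∆ insert m t = insert m ({a} ∆ t) := by
        ext x; simp only [Finset.mem_symmDiff, Finset.mem_singleton, Finset.mem_insert]
        grind
      refine ⟨-ζ, ?_⟩
      rw [← mul_assoc, hc.anticomm a m hma.ne', neg_mul, mul_assoc, hζ, mul_smul_comm, hset,
        cliffProd_insert_of_forall_lt c hmat, Units.neg_smul]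

lemma exists_cliffProd_mul_cliffProd_eq (s t : Finset (Fin n)) :
    ∃ ζ : ℤˣ, cliffProd c s * cliffProd c t = ζ • cliffProd c (s ∆ t) := by
  induction s using Finset.induction_on_min with
  | empty =>
    exact ⟨1, by rw [← Finset.bot_eq_empty, bot_symmDiff, one_smul, Finset.bot_eq_empty,
      cliffProd_empty, one_mul]⟩
  | insert m s hm ih =>
    obtain ⟨ζ, hζ⟩ := ih
    obtain ⟨ζ', hζ'⟩ := hc.exists_mul_cliffProd_eq m (s ∆ t)
    have hset : insert m s = {m} ∆ s :=
      (Finset.disjoint_singleton_left.2 fun h => (hm m h).false).symmDiff_eq_sup.symm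
    refine ⟨ζ * ζ', ?_⟩
    rw [cliffProd_insert_of_forall_lt c hm, mul_assoc, hζ, mul_smul_comm, hζ', smul_smul, hset,
      symmDiff_assoc]

lemma mul_cliffProd_comm (a : Fin n) (t : Finset (Fin n)) :
    c a * cliffProd c t = (-1 : ℤˣ) ^ (t.erase a).card • (cliffProd c t * c a) := by
  induction t using Finset.induction_on_min with
  | empty => simp
  | insert m t hm ih =>
    have hmt : m ∉ t := fun h => (hm m h).false
    rw [cliffProd_insert_of_forall_lt c hm]
    by_cases ham : a = m
    · subst ham
      conv_lhs => rw [ih, Finset.erase_eq_of_notMem hmt]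
      rw [Finset.erase_insert hmt, mul_smul_comm, mul_assoc]
    · rw [Finset.erase_insert_of_ne (Ne.symm ham), Finset.card_insert_of_notMem
        (fun h => hmt (Finset.mem_of_mem_erase h)), pow_succ, mul_smul, ← mul_assoc,
        hc.anticomm a m ham, neg_mul, mul_assoc, ih, mul_smul_comm, Units.neg_smul, one_smul,
        smul_neg, mul_assoc]

lemma cliffProd_mul_cliffProd_comm_of_disjoint {s t : Finset (Fin n)} (h : Disjoint s t) :
    cliffProd c s * cliffProd c t =
      (-1 : ℤˣ) ^ (s.card * t.card) • (cliffProd c t * cliffProd c s) := by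
  induction s using Finset.induction_on_min with
  | empty => simp
  | insert m s hm ih =>
    have hms : m ∉ s := fun h => (hm m h).false
    rw [Finset.disjoint_insert_left] at h
    rw [cliffProd_insert_of_forall_lt c hm, mul_assoc, ih h.2, mul_smul_comm, ← mul_assoc,
      hc.mul_cliffProd_comm m t, Finset.erase_eq_of_notMem h.1, smul_mul_assoc, smul_smul,
      mul_assoc, Finset.card_insert_of_notMem hms, add_mul, one_mul, pow_add, mul_comm]

end IsCliffordFamily

end Clifford

section Basis

variable {K A : Type*} [CommRing K] [Ring A] [Algebra K A]

lemma Module.Basis.repr_mul_comm {ι : Type*} (b : Module.Basis ι K A) (i : ι)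
    (h : ∀ s t, b.repr (b s * b t) i = b.repr (b t * b s) i) (X Y : A) :
    b.repr (X * Y) i = b.repr (Y * X) i := by
  have hB : (LinearMap.mul K A).compr₂ (b.coord i) =
      ((LinearMap.mul K A).compr₂ (b.coord i)).flip :=
    LinearMap.ext_basis b b h
  exact LinearMap.congr_fun₂ hB X Y

-- Conjugation by `g` is diagonal in `b` with eigenvalues `σ`, and it fixes `Z`.
lemma Module.Basis.repr_eq_zero_of_commute [IsAddTorsionFree K] {ι : Type*} [Fintype ι]
    (b : Module.Basis ι K A) {g Z : A} (hg : IsUnit g) {σ : ι → ℤˣ}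
    (hσ : ∀ u, g * b u = σ u • (b u * g)) (hZ : Commute g Z) {t : ι} (ht : σ t = -1) :
    b.repr Z t = 0 := by
  have hconj : (∑ u, (σ u • b.repr Z u) • b u) * g = (∑ u, b.repr Z u • b u) * g := by
    calc (∑ u, (σ u • b.repr Z u) • b u) * g = g * Z := by
          conv_rhs => rw [← b.sum_repr Z]
          simp only [Finset.sum_mul, Finset.mul_sum, mul_smul_comm, hσ, smul_mul_assoc, smul_assoc,
            smul_comm (σ _) (b.repr Z _)]
      _ = (∑ u, b.repr Z u • b u) * g := by rw [hZ.eq, b.sum_repr]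
  have ht' : σ t • b.repr Z t = b.repr Z t := by
    simpa only [b.repr_sum_self] using congrArg (fun x => b.repr x t) (hg.mul_left_inj.1 hconj)
  rwa [ht, Units.neg_smul, one_smul, neg_eq_self] at ht'

lemma commute_of_forall_commute_generators {n : ℕ} {c : Fin n → A}
    (b : Module.Basis (Finset (Fin n)) K A) (hb : ∀ s, b s = cliffProd c s) {Z : A}
    (h : ∀ a, Commute (c a) Z) (V : A) : Commute V Z := by
  rw [← b.sum_repr V]
  exact Commute.sum_left _ _ _ fun s _ => (hb s ▸ commute_cliffProd h s).smul_left _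

namespace IsCliffordFamily

variable {n : ℕ} {c : Fin n → A} (hc : IsCliffordFamily c)
  (b : Module.Basis (Finset (Fin n)) K A) (hb : ∀ s, b s = cliffProd c s)
include hc hb

lemma repr_eq_zero_of_forall_commute [IsAddTorsionFree K] {Z : A} (hZ : ∀ a, Commute (c a) Z)
    {t : Finset (Fin n)} (h0 : t ≠ ∅) (hu : t ≠ Finset.univ) : b.repr Z t = 0 := by
  obtain ⟨a, ha⟩ : ∃ a, Odd (t.erase a).card := by
    rcases Nat.even_or_odd t.card with ht | ht
    · obtain ⟨a, hat⟩ := Finset.nonempty_iff_ne_empty.2 h0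
      refine ⟨a, ?_⟩
      rw [Finset.card_erase_of_mem hat]
      exact Nat.Even.sub_odd (Finset.card_pos.2 ⟨a, hat⟩) ht odd_one
    · obtain ⟨a, hat⟩ : ∃ a, a ∉ t := by simpa [Finset.eq_univ_iff_forall] using hu
      exact ⟨a, by rwa [Finset.erase_eq_of_notMem hat]⟩
  exact b.repr_eq_zero_of_commute (hc.isUnit a) (σ := fun u => (-1) ^ (u.erase a).card)
    (fun u => by rw [hb]; exact hc.mul_cliffProd_comm a u) (hZ a) ha.neg_one_pow

lemma eq_repr_empty_smul_one_add_repr_univ_smul [IsAddTorsionFree K] [NeZero n] {Z : A}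
    (hZ : ∀ a, Commute (c a) Z) :
    Z = b.repr Z ∅ • 1 + b.repr Z Finset.univ • cliffProd c Finset.univ := by
  conv_lhs => rw [← b.sum_repr Z]
  rw [← Finset.sum_subset (Finset.subset_univ {∅, Finset.univ}), Finset.sum_pair
    Finset.univ_nonempty.ne_empty.symm, hb, hb, cliffProd_empty]
  intro u _ hu
  simp only [Finset.mem_insert, Finset.mem_singleton, not_or] at hu
  rw [hc.repr_eq_zero_of_forall_commute b hb hZ hu.1 hu.2, zero_smul]

lemma repr_cliffProd_mul_cliffProd_of_ne {s t i : Finset (Fin n)} (h : s ∆ t ≠ i) :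
    b.repr (cliffProd c s * cliffProd c t) i = 0 := by
  obtain ⟨ζ, hζ⟩ := hc.exists_cliffProd_mul_cliffProd_eq s t
  rw [hζ, ← hb, Units.smul_def, map_zsmul, b.repr_self, Finsupp.smul_apply,
    Finsupp.single_apply, if_neg h, smul_zero]

lemma repr_mul_comm_empty (X Y : A) : b.repr (X * Y) ∅ = b.repr (Y * X) ∅ := by
  refine b.repr_mul_comm ∅ (fun s t => ?_) X Y
  rw [hb, hb]
  by_cases hst : s = t
  · rw [hst]
  · rw [hc.repr_cliffProd_mul_cliffProd_of_ne b hb (Finset.symmDiff_eq_empty.not.2 hst),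
      hc.repr_cliffProd_mul_cliffProd_of_ne b hb (Finset.symmDiff_eq_empty.not.2 (Ne.symm hst))]

-- Complementary `s` and `t` have sizes of opposite parity as `n` is odd, so `cliffProd c s`
-- and `cliffProd c t` commute.
lemma repr_mul_comm_univ (hn : Odd n) (X Y : A) :
    b.repr (X * Y) Finset.univ = b.repr (Y * X) Finset.univ := by
  refine b.repr_mul_comm Finset.univ (fun s t => ?_) X Y
  rw [hb, hb]
  by_cases hst : s ∆ t = Finset.univ
  · have hcompl : IsCompl s t := (symmDiff_eq_top s t).1 hst
    have hcard : s.card + t.card = n := by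
      rw [← hcompl.compl_eq, Finset.card_add_card_compl, Fintype.card_fin]
    have heven : Even (s.card * t.card) := by
      rcases Nat.even_or_odd s.card with hs | hs
      · exact hs.mul_right _
      · exact (Nat.odd_add.1 (by rwa [hcard]) |>.1 hs).mul_left _
    rw [hc.cliffProd_mul_cliffProd_comm_of_disjoint hcompl.disjoint, heven.neg_one_pow, one_smul]
  · rw [hc.repr_cliffProd_mul_cliffProd_of_ne b hb hst,
      hc.repr_cliffProd_mul_cliffProd_of_ne b hb (symmDiff_comm s t ▸ hst)]

end IsCliffordFamily

end Basis

section GenF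

variable {F A : Type*} [RCLike F] [Ring A] [Algebra F A] {n : ℕ}

lemma inverse_mul_mul_mul_eq_mul_inverse_mul_mul {x y g : A} (U : A) (hx : IsUnit x)
    (hy : IsUnit y) {ζ : ℤˣ} (h : x * g = ζ • y) :
    Ring.inverse x * U * x * g = g * (Ring.inverse y * U * y) := by
  have hgy : g * Ring.inverse y = ζ • Ring.inverse x := by
    calc g * Ring.inverse y = Ring.inverse x * (x * g) * Ring.inverse y := by
          rw [← mul_assoc, Ring.inverse_mul_cancel _ hx, one_mul]
      _ = ζ • Ring.inverse x := by
          rw [h, mul_smul_comm, smul_mul_assoc, mul_assoc, Ring.mul_inverse_cancel _ hy, mul_one]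
  calc Ring.inverse x * U * x * g = Ring.inverse x * U * (ζ • y) := by rw [mul_assoc _ x, h]
    _ = (ζ • Ring.inverse x) * U * y := by rw [mul_smul_comm, smul_mul_assoc, smul_mul_assoc]
    _ = g * (Ring.inverse y * U * y) := by rw [← hgy]; simp only [mul_assoc]

lemma IsCliffordFamily.commute_genF {γ : Fin n → A} (hγ : IsCliffordFamily γ) (a : Fin n)
    (U : A) : Commute (γ a) (genF F γ U) := by
  have hterm : ∀ s, Ring.inverse (cliffProd γ s) * U * cliffProd γ s * γ a =
      γ a * (Ring.inverse (cliffProd γ (s ∆ {a})) * U * cliffProd γ (s ∆ {a})) := fun s => by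
    obtain ⟨ζ, hζ⟩ := hγ.exists_cliffProd_mul_cliffProd_eq s {a}
    rw [cliffProd_singleton] at hζ
    exact inverse_mul_mul_mul_eq_mul_inverse_mul_mul U (isUnit_cliffProd hγ.isUnit s)
      (isUnit_cliffProd hγ.isUnit _) hζ
  refine Eq.symm ?_
  simp only [genF, smul_mul_assoc, mul_smul_comm, Finset.sum_mul, Finset.mul_sum, hterm]
  congr 1
  exact Equiv.sum_comp (symmDiff_left_involutive ({a} : Finset (Fin n))).toPerm
    fun s => γ a * (Ring.inverse (cliffProd γ s) * U * cliffProd γ s)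

lemma repr_genF_of_repr_mul_comm {γ : Fin n → A} (hγ : ∀ a, IsUnit (γ a)) {ι : Type*}
    (b : Module.Basis ι F A) (i : ι) (htr : ∀ X Y, b.repr (X * Y) i = b.repr (Y * X) i)
    (U : A) : b.repr (genF F γ U) i = b.repr U i := by
  have hterm : ∀ s, b.repr (Ring.inverse (cliffProd γ s) * U * cliffProd γ s) i = b.repr U i :=
    fun s => by
      rw [mul_assoc, htr, mul_assoc, Ring.mul_inverse_cancel _ (isUnit_cliffProd hγ s), mul_one]
  simp only [genF, map_smul, map_sum, Finsupp.smul_apply, Finsupp.coe_finsetSum,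
    Finset.sum_apply, hterm, Finset.sum_const, Finset.card_univ, Fintype.card_finset,
    Fintype.card_fin, smul_eq_mul, nsmul_eq_mul]
  push_cast
  field_simp

end GenF

theorem stmt12_general {F : Type*} [RCLike F] (p n : ℕ) (hodd : Odd n)
    {A : Type*} [Ring A] [Algebra F A]
    (e : Fin n → A)
    (hrele : ∀ a b : Fin n, e a * e b + e b * e a = ((2 * eta p a b : ℤ) : A))
    (bE : Module.Basis (Finset (Fin n)) F A)
    (hbE : ∀ s, bE s = cliffProd e s)
    (γ : Fin n → A)
    (hγ : ∀ a b : Fin n, γ a * γ b + γ b * γ a = ((2 * eta p a b : ℤ) : A))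
    (bΓ : Module.Basis (Finset (Fin n)) F A)
    (hbΓ : ∀ s, bΓ s = cliffProd γ s) :
    (∀ U : A, genF F γ U =
      (bE.repr U ∅) • (1 : A) + (bE.repr U Finset.univ) • cliffProd e Finset.univ) ∧
    (∀ U : A, genF F γ (genF F γ U) = genF F γ U) ∧
    (∀ U : A, genF F γ U ∈
      Submodule.span F ({1, cliffProd e Finset.univ} : Set A)) := by
  have : IsAddTorsionFree A := .of_isTorsionFree F A
  have : NeZero n := ⟨hodd.pos.ne'⟩
  have he := isCliffordFamily_of_mul_add_mul_eq_eta p hrele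
  have hγc := isCliffordFamily_of_mul_add_mul_eq_eta p hγ
  have hcentral (U : A) (a : Fin n) : Commute (e a) (genF F γ U) :=
    commute_of_forall_commute_generators bΓ hbΓ (hγc.commute_genF · U) (e a)
  have hrepr_empty (U : A) : bE.repr (genF F γ U) ∅ = bE.repr U ∅ :=
    repr_genF_of_repr_mul_comm hγc.isUnit bE ∅ (he.repr_mul_comm_empty bE hbE) U
  have hrepr_univ (U : A) : bE.repr (genF F γ U) Finset.univ = bE.repr U Finset.univ :=
    repr_genF_of_repr_mul_comm hγc.isUnit bE _ (he.repr_mul_comm_univ bE hbE hodd) U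
  have hformula (U : A) : genF F γ U =
      bE.repr U ∅ • (1 : A) + bE.repr U Finset.univ • cliffProd e Finset.univ := by
    rw [← hrepr_empty, ← hrepr_univ]
    exact he.eq_repr_empty_smul_one_add_repr_univ_smul bE hbE (hcentral U)
  refine ⟨hformula, fun U => ?_, fun U => ?_⟩
  · rw [hformula (genF F γ U), hrepr_empty, hrepr_univ, hformula U]
  · rw [hformula U]
    exact add_mem (Submodule.smul_mem _ _ (Submodule.subset_span (by simp)))
      (Submodule.smul_mem _ _ (Submodule.subset_span (by simp)))

/-- Let `{γ^A}` be a basis of `Cl(p,q)` generated by `γ^1,…,γ^n` satisfying the Clifford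
relations, with `n = p + q` odd. Then `F(U) = 2⁻ⁿ ∑_A (γ^A)⁻¹ U γ^A = Tr(U)·e + π(U)·e^{1…n}`,
and `F` is a projection onto the center `span{e, e^{1…n}}` of the Clifford algebra. -/
theorem stmt12 {F : Type*} [RCLike F] (p q n : ℕ) (hn : n = p + q) (hodd : Odd n)
    {A : Type*} [Ring A] [Algebra F A]
    (e : Fin n → A)
    (hrele : ∀ a b : Fin n, e a * e b + e b * e a = ((2 * eta p a b : ℤ) : A))
    (bE : Module.Basis (Finset (Fin n)) F A)
    (hbE : ∀ s, bE s = cliffProd e s)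
    (γ : Fin n → A)
    (hγ : ∀ a b : Fin n, γ a * γ b + γ b * γ a = ((2 * eta p a b : ℤ) : A))
    (bΓ : Module.Basis (Finset (Fin n)) F A)
    (hbΓ : ∀ s, bΓ s = cliffProd γ s) :
    (∀ U : A, genF F γ U =
      (bE.repr U ∅) • (1 : A) + (bE.repr U Finset.univ) • cliffProd e Finset.univ) ∧
    (∀ U : A, genF F γ (genF F γ U) = genF F γ U) ∧
    (∀ U : A, genF F γ U ∈
      Submodule.span F ({1, cliffProd e Finset.univ} : Set A)) :=
  stmt12_general p n hodd e hrele bE hbE γ hγ bΓ hbΓ
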